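/- Let C(x) = σ² M_ν(κx) with σ, κ > 0 and suppose the submultiplicative bound C(x+y) ≤ C(x) f(y) holds for all x, y > 0, where f(y) = M_{max(ν,1/2)}(κy) ∈ (0,1) is decreasing. Then for any δ > 0, ℓ > 0 and L = δ + ℓ, one has (2^d −1) C(δ) + 2^d ∑_{k∈ℕ₀^d\{0}} C(‖k‖₂ L) ≤ (2^d −1)(1 + 2^d d! f(ℓ)/(1−f(ℓ))^d) · σ² M_ν(κδ), assuming d ≥ 1. -/

import Mathlib

/-- The modified Bessel function of the second kind, via its integral representation. -/
noncomputable def besselK (ν x : ℝ) : ℝ :=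
  ∫ t in Set.Ioi (0 : ℝ), Real.exp (-x * Real.cosh t) * Real.cosh (ν * t)

/-- The unit Matérn function `M_ν(x) = x^ν K_ν(x) / (2^(ν-1) Γ(ν))`. -/
noncomputable def maternFn (ν x : ℝ) : ℝ :=
  x ^ ν * besselK ν x / (2 ^ (ν - 1) * Real.Gamma ν)

/-!
For `k ∈ ℕ^d \ {0}` with `m = maxᵢ kᵢ ≥ 1` we have `‖k‖₂ L ≥ m L`; iterating
`C(x + L) ≤ C(x) f(L) ≤ C(x) f(ℓ)` from `C(L) = C(δ + ℓ) ≤ C(δ) f(ℓ)` gives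
`C(‖k‖₂ L) ≤ C(δ) f(ℓ)^m`. The number of lattice points of max-norm `m` is at most
`(m+1)^d - m^d ≤ d (m+1)^(d-1) ≤ d 2^(d-1) (d-1)! binom(m+d-2, d-1)`, so the negative binomial
series bounds the lattice sum by `2^(d-1) d! f(ℓ) / (1 - f(ℓ))^d · C(δ)`. It remains to use
`2^(d-1) ≤ 2^d - 1`.
-/

open Finset
open scoped Nat

lemma univ_sup_eq_zero_iff {ι : Type*} [Fintype ι] {k : ι → ℕ} : univ.sup k = 0 ↔ k = 0 :=
  (Finset.sup_eq_bot_iff k univ).trans (by simp [funext_iff])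

lemma card_filter_sup_eq_le {d : ℕ} (s : Finset (Fin d → ℕ)) {m : ℕ} (hm : 0 < m) :
    #{k ∈ s | univ.sup k = m} ≤ (m + 1) ^ d - m ^ d := by
  have hsub : {k ∈ s | univ.sup k = m} ⊆
      Fintype.piFinset (fun _ => range (m + 1)) \ Fintype.piFinset (fun _ => range m) := by
    intro k hk
    obtain ⟨-, hkm⟩ := mem_filter.1 hk
    simp only [mem_sdiff, Fintype.mem_piFinset, mem_range]
    refine ⟨fun i => Nat.lt_succ_of_le (hkm ▸ le_sup (mem_univ i)), fun hlt => ?_⟩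
    have : univ.sup k < m := (Finset.sup_lt_iff (show ⊥ < m from hm)).2 fun i _ => hlt i
    omega
  calc #{k ∈ s | univ.sup k = m}
      ≤ #(Fintype.piFinset (fun _ => range (m + 1)) \ Fintype.piFinset (fun _ => range m)) :=
        card_le_card hsub
    _ = (m + 1) ^ d - m ^ d := by
        rw [card_sdiff_of_subset
          (Fintype.piFinset_subset _ _ fun _ => range_subset_range.2 m.le_succ)]
        simp

lemma add_one_pow_sub_pow_le {a : ℝ} (ha : 0 ≤ a) (e : ℕ) :
    (a + 1) ^ (e + 1) - a ^ (e + 1) ≤ (e + 1) * (a + 1) ^ e := by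
  have h := abs_pow_sub_pow_le (a + 1) a (e + 1)
  rw [max_eq_left (by rw [abs_of_nonneg ha, abs_of_nonneg (by linarith)]; linarith)] at h
  simpa [abs_of_nonneg (by linarith : 0 ≤ a + 1)] using (le_abs_self _).trans h

lemma add_one_pow_le_factorial_mul_choose (n e : ℕ) : (n + 1) ^ e ≤ e ! * (n + e).choose e := by
  rw [← Nat.ascFactorial_eq_factorial_mul_choose]
  exact Nat.pow_succ_le_ascFactorial (n + 1) e

lemma sum_range_choose_mul_pow_le {x : ℝ} (hx0 : 0 ≤ x) (hx1 : x < 1) (e N : ℕ) :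
    ∑ n ∈ range N, ((n + e).choose e : ℝ) * x ^ n ≤ 1 / (1 - x) ^ (e + 1) := by
  have hs := hasSum_choose_mul_geometric_of_norm_lt_one (𝕜 := ℝ) e
    (by rwa [Real.norm_eq_abs, abs_of_nonneg hx0])
  exact hs.tsum_eq ▸ hs.summable.sum_le_tsum _ fun n _ => by positivity

lemma card_filter_sup_eq_succ_le {e : ℕ} (s : Finset (Fin (e + 1) → ℕ)) (n : ℕ) :
    (#{k ∈ s | univ.sup k = n + 1} : ℝ) ≤ 2 ^ e * (e + 1)! * (n + e).choose e := by
  have hcard := card_filter_sup_eq_le s n.succ_pos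
  rw [← Nat.cast_le (α := ℝ), Nat.cast_sub (Nat.pow_le_pow_left (n + 1).le_succ _)] at hcard
  have hchoose : ((n + 1 : ℕ) : ℝ) ^ e ≤ e ! * (n + e).choose e := by
    exact_mod_cast add_one_pow_le_factorial_mul_choose n e
  calc (#{k ∈ s | univ.sup k = n + 1} : ℝ)
      ≤ ((n + 1 : ℕ) + 1 : ℝ) ^ (e + 1) - ((n + 1 : ℕ) : ℝ) ^ (e + 1) := by
        exact_mod_cast hcard
    _ ≤ (e + 1) * ((n + 1 : ℕ) + 1) ^ e := add_one_pow_sub_pow_le (by positivity) e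
    _ ≤ (e + 1) * (2 ^ e * ((n + 1 : ℕ) : ℝ) ^ e) := by
        rw [← mul_pow]; gcongr; push_cast; linarith
    _ ≤ (e + 1) * (2 ^ e * (e ! * (n + e).choose e)) := by gcongr
    _ = 2 ^ e * (e + 1)! * (n + e).choose e := by push_cast [Nat.factorial_succ]; ring

theorem sum_pow_sup_le {e : ℕ} {x : ℝ} (hx0 : 0 ≤ x) (hx1 : x < 1)
    (s : Finset (Fin (e + 1) → ℕ)) (hs : 0 ∉ s) :
    ∑ k ∈ s, x ^ univ.sup k ≤ 2 ^ e * (e + 1)! * x / (1 - x) ^ (e + 1) := by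
  set N := s.sup fun k => univ.sup k
  have hfiber_zero : {k ∈ s | univ.sup k = 0} = ∅ :=
    filter_eq_empty_iff.2 fun k hk hk0 => hs (univ_sup_eq_zero_iff.1 hk0 ▸ hk)
  calc ∑ k ∈ s, x ^ univ.sup k
      = ∑ m ∈ range (N + 1), (#{k ∈ s | univ.sup k = m} : ℝ) * x ^ m := by
        rw [← sum_fiberwise_of_maps_to (g := fun k => univ.sup k)
          fun k hk => mem_range.2 (Nat.lt_succ_of_le (le_sup hk))]
        refine sum_congr rfl fun m _ => ?_
        rw [sum_congr rfl fun k hk => by rw [(mem_filter.1 hk).2], sum_const, nsmul_eq_mul]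
    _ = ∑ n ∈ range N, (#{k ∈ s | univ.sup k = n + 1} : ℝ) * x ^ (n + 1) := by
        rw [sum_range_succ', hfiber_zero, card_empty, Nat.cast_zero, zero_mul, add_zero]
    _ ≤ ∑ n ∈ range N, 2 ^ e * (e + 1)! * x * ((n + e).choose e * x ^ n) := by
        refine sum_le_sum fun n _ => ?_
        calc _ ≤ (2 ^ e * (e + 1)! * (n + e).choose e : ℝ) * x ^ (n + 1) := by
              gcongr; exact card_filter_sup_eq_succ_le s n
          _ = _ := by ring
    _ ≤ 2 ^ e * (e + 1)! * x * (1 / (1 - x) ^ (e + 1)) := by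
        rw [← mul_sum]; gcongr; exact sum_range_choose_mul_pow_le hx0 hx1 e N
    _ = 2 ^ e * (e + 1)! * x / (1 - x) ^ (e + 1) := by ring

lemma natCast_sup_le_sqrt_sum_sq {ι : Type*} [Fintype ι] (k : ι → ℕ) :
    ((univ.sup k : ℕ) : ℝ) ≤ √(∑ i, (k i : ℝ) ^ 2) := by
  refine sup_induction (p := fun n : ℕ => (n : ℝ) ≤ √(∑ i, (k i : ℝ) ^ 2)) (by simp)
    (fun a ha b hb => by simpa using And.intro ha hb) fun i _ => ?_
  exact Real.le_sqrt_of_sq_le (single_le_sum (f := fun i => (k i : ℝ) ^ 2)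
    (fun _ _ => by positivity) (mem_univ i))

lemma apply_succ_mul_le {C : ℝ → ℝ} {L q : ℝ} (hL : 0 < L) (hq : 0 ≤ q)
    (hstep : ∀ x, 0 < x → C (x + L) ≤ C x * q) (n : ℕ) :
    C ((n + 1) * L) ≤ C L * q ^ n := by
  induction n with
  | zero => simp
  | succ n ih =>
    calc C ((↑(n + 1) + 1) * L) = C ((n + 1) * L + L) := by push_cast; ring_nf
      _ ≤ C ((n + 1) * L) * q := hstep _ (by positivity)
      _ ≤ C L * q ^ n * q := by gcongr
      _ = C L * q ^ (n + 1) := by ring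

lemma apply_succ_mul_add_le {C f : ℝ → ℝ} {δ ℓ : ℝ} (hδ : 0 < δ) (hℓ : 0 < ℓ)
    (hC_nonneg : ∀ x, 0 < x → 0 ≤ C x) (hfℓ : 0 ≤ f ℓ) (hf_le : f (δ + ℓ) ≤ f ℓ)
    (hsub : ∀ x y, 0 < x → 0 < y → C (x + y) ≤ C x * f y) (n : ℕ) :
    C ((n + 1) * (δ + ℓ)) ≤ C δ * f ℓ ^ (n + 1) := by
  have hstep (x : ℝ) (hx : 0 < x) : C (x + (δ + ℓ)) ≤ C x * f ℓ :=
    (hsub x _ hx (by positivity)).trans (by gcongr; exact hC_nonneg x hx)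
  calc C ((n + 1) * (δ + ℓ)) ≤ C (δ + ℓ) * f ℓ ^ n :=
        apply_succ_mul_le (by positivity) hfℓ hstep n
    _ ≤ C δ * f ℓ * f ℓ ^ n := by gcongr; exact hsub δ ℓ hδ hℓ
    _ = C δ * f ℓ ^ (n + 1) := by ring

theorem tsum_apply_sqrt_sum_sq_mul_le {C f : ℝ → ℝ} {δ ℓ : ℝ} {e : ℕ}
    (hδ : 0 < δ) (hℓ : 0 < ℓ)
    (hC_nonneg : ∀ x, 0 < x → 0 ≤ C x) (hC_anti : ∀ x y, 0 < x → x ≤ y → C y ≤ C x)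
    (hfℓ : f ℓ ∈ Set.Ioo 0 1) (hf_le : f (δ + ℓ) ≤ f ℓ)
    (hsub : ∀ x y, 0 < x → 0 < y → C (x + y) ≤ C x * f y) :
    ∑' k : {k : Fin (e + 1) → ℕ // k ≠ 0}, C (√(∑ i, (k.1 i : ℝ) ^ 2) * (δ + ℓ))
      ≤ C δ * (2 ^ e * (e + 1)! * f ℓ / (1 - f ℓ) ^ (e + 1)) := by
  obtain ⟨hq0, hq1⟩ := hfℓ
  have hterm (k : {k : Fin (e + 1) → ℕ // k ≠ 0}) :
      C (√(∑ i, (k.1 i : ℝ) ^ 2) * (δ + ℓ)) ≤ C δ * f ℓ ^ univ.sup k.1 := by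
    obtain ⟨n, hn⟩ : ∃ n, univ.sup k.1 = n + 1 :=
      Nat.exists_eq_add_one.2 (Nat.pos_of_ne_zero (univ_sup_eq_zero_iff.not.2 k.2))
    have hsup : ((n + 1 : ℕ) : ℝ) ≤ √(∑ i, (k.1 i : ℝ) ^ 2) :=
      hn ▸ natCast_sup_le_sqrt_sum_sq k.1
    push_cast at hsup
    rw [hn]
    exact (hC_anti _ _ (by positivity) (by gcongr)).trans
      (apply_succ_mul_add_le hδ hℓ hC_nonneg hq0.le hf_le hsub n)
  have hCδ := hC_nonneg δ hδ
  refine tsum_le_of_sum_le' (by have := sub_pos.2 hq1; positivity) fun s => ?_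
  calc ∑ k ∈ s, C (√(∑ i, (k.1 i : ℝ) ^ 2) * (δ + ℓ))
      ≤ ∑ k ∈ s, C δ * f ℓ ^ univ.sup k.1 := sum_le_sum fun k _ => hterm k
    _ = C δ * ∑ k ∈ s.map (Function.Embedding.subtype _), f ℓ ^ univ.sup k := by
        rw [mul_sum, sum_map]; rfl
    _ ≤ C δ * (2 ^ e * (e + 1)! * f ℓ / (1 - f ℓ) ^ (e + 1)) := by
        gcongr; exact sum_pow_sup_le hq0.le hq1 _ (by simp)

theorem stmt_15_general (d : ℕ) (hd : 1 ≤ d) (ν σ κ : ℝ)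
    (C f : ℝ → ℝ)
    (hC : ∀ x, C x = σ ^ 2 * maternFn ν (κ * x))
    (hC_pos : ∀ x, 0 < x → 0 < C x)
    (hC_anti : ∀ x y, 0 < x → x ≤ y → C y ≤ C x)
    (hf_mem : ∀ y, 0 < y → f y ∈ Set.Ioo (0 : ℝ) 1)
    (hf_anti : ∀ x y, 0 < x → x ≤ y → f y ≤ f x)
    (hsub : ∀ x y, 0 < x → 0 < y → C (x + y) ≤ C x * f y)
    (δ ℓ L : ℝ) (hδ : 0 < δ) (hℓ : 0 < ℓ) (hLdef : L = δ + ℓ) :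
    ((2 : ℝ) ^ d - 1) * C δ
        + 2 ^ d * ∑' k : {k : Fin d → ℕ // k ≠ 0},
            C (Real.sqrt (∑ i, ((k.1 i : ℝ)) ^ 2) * L)
      ≤ ((2 : ℝ) ^ d - 1) * (1 + 2 ^ d * Nat.factorial d * f ℓ / (1 - f ℓ) ^ d)
          * (σ ^ 2 * maternFn ν (κ * δ)) := by
  obtain ⟨e, rfl⟩ : ∃ e, d = e + 1 := ⟨d - 1, by omega⟩
  subst hLdef
  have hlattice := tsum_apply_sqrt_sum_sq_mul_le (e := e) hδ hℓ (fun x hx => (hC_pos x hx).le)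
    hC_anti (hf_mem ℓ hℓ) (hf_anti ℓ _ hℓ (by linarith)) hsub
  obtain ⟨hq0, hq1⟩ := hf_mem ℓ hℓ
  have hCδ := (hC_pos δ hδ).le
  set K : ℝ := (e + 1)! * f ℓ / (1 - f ℓ) ^ (e + 1)
  have hK : 0 ≤ K := by have := sub_pos.2 hq1; positivity
  have h2e : (2 : ℝ) ^ e ≤ 2 ^ (e + 1) - 1 := by
    have : (1 : ℝ) ≤ 2 ^ e := one_le_pow₀ one_le_two
    rw [pow_succ]; linarith
  rw [← hC δ]
  calc _ ≤ (2 ^ (e + 1) - 1) * C δ + 2 ^ (e + 1) * (C δ * ((2 ^ (e + 1) - 1) * K)) := by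
        gcongr
        calc _ ≤ C δ * (2 ^ e * K) := hlattice.trans_eq (by ring)
          _ ≤ _ := by gcongr
    _ = _ := by ring

/-- Main covariance error bound: with `C(x) = σ² M_ν(κx)`, `f(y) = M_{max(ν,1/2)}(κy)`
decreasing with values in `(0,1)` and satisfying `C(x+y) ≤ C(x) f(y)`, for any
`δ, ℓ > 0` and `L = δ + ℓ`:
`(2^d-1) C(δ) + 2^d ∑_{k∈ℕ₀^d\{0}} C(‖k‖₂ L)
  ≤ (2^d-1)(1 + 2^d d! f(ℓ)/(1-f(ℓ))^d) σ² M_ν(κδ)`. -/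
theorem stmt_15 (d : ℕ) (hd : 1 ≤ d) (ν σ κ : ℝ) (hν : 0 < ν) (hσ : 0 < σ) (hκ : 0 < κ)
    (C f : ℝ → ℝ)
    (hC : ∀ x, C x = σ ^ 2 * maternFn ν (κ * x))
    (hf : ∀ y, f y = maternFn (max ν (1/2)) (κ * y))
    (hC_pos : ∀ x, 0 < x → 0 < C x)
    (hC_anti : ∀ x y, 0 < x → x ≤ y → C y ≤ C x)
    (hf_mem : ∀ y, 0 < y → f y ∈ Set.Ioo (0 : ℝ) 1)
    (hf_anti : ∀ x y, 0 < x → x ≤ y → f y ≤ f x)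
    (hsub : ∀ x y, 0 < x → 0 < y → C (x + y) ≤ C x * f y)
    (δ ℓ L : ℝ) (hδ : 0 < δ) (hℓ : 0 < ℓ) (hLdef : L = δ + ℓ) :
    ((2 : ℝ) ^ d - 1) * C δ
        + 2 ^ d * ∑' k : {k : Fin d → ℕ // k ≠ 0},
            C (Real.sqrt (∑ i, ((k.1 i : ℝ)) ^ 2) * L)
      ≤ ((2 : ℝ) ^ d - 1) * (1 + 2 ^ d * Nat.factorial d * f ℓ / (1 - f ℓ) ^ d)
          * (σ ^ 2 * maternFn ν (κ * δ)) :=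
  stmt_15_general d hd ν σ κ C f hC hC_pos hC_anti hf_mem hf_anti hsub δ ℓ L hδ hℓ hLdef
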